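/- arXiv:1710.10163 — 4 statements merged into one kernel-verified Lean document; each statement's English description precedes it below -/
import Mathlib

section
/- Let K be a number field of class number 1, let p be a prime, and let a, b, c ∈ O_K be pairwise coprime nonzero elements with a^p + b^p + c^p = 0. If a prime ideal 𝔮 of O_K divides both 2^4(b^{2p} - a^p c^p) and 2^4 (abc)^{2p}, then 𝔮 divides 2O_K. -/
/-!
Modulo a prime `𝔮` not containing `2`, the two hypotheses say `(abc)²ᵖ ≡ 0` and `b²ᵖ ≡ aᵖcᵖ`.
Substituting one into the other gives `b⁶ᵖ ≡ 0` and `(ac)³ᵖ ≡ 0`, so `𝔮` contains `b` together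
with `a` or `c`, which coprimality forbids.
-/

open NumberField

theorem Ideal.IsPrime.mem_and_mul_mem_of_frey_invariants_mem {R : Type*} [CommRing R]
    {q : Ideal R} (hq : q.IsPrime) {a b c : R} {n : ℕ}
    (hΔ : (a * b * c) ^ (2 * n) ∈ q) (hc4 : b ^ (2 * n) - a ^ n * c ^ n ∈ q) :
    b ∈ q ∧ a * c ∈ q := by
  have hb : b ^ (6 * n) ∈ q := by
    have e : b ^ (6 * n) = (a * b * c) ^ (2 * n)
        + b ^ (2 * n) * (b ^ (2 * n) + a ^ n * c ^ n) * (b ^ (2 * n) - a ^ n * c ^ n) := by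
      ring
    exact e ▸ q.add_mem hΔ (q.mul_mem_left _ hc4)
  have hac : (a * c) ^ (3 * n) ∈ q := by
    have e : (a * c) ^ (3 * n) = (a * b * c) ^ (2 * n)
        - (a * c) ^ (2 * n) * (b ^ (2 * n) - a ^ n * c ^ n) := by
      ring
    exact e ▸ q.sub_mem hΔ (q.mul_mem_left _ hc4)
  exact ⟨hq.mem_of_pow_mem _ hb, hq.mem_of_pow_mem _ hac⟩

theorem prime_dividing_c4_and_disc_divides_two_general
    (K : Type*) [Field K] [NumberField K]
    (p : ℕ)
    (a b c : 𝓞 K)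
    (hab : IsCoprime (Ideal.span {a}) (Ideal.span {b}))
    (hbc : IsCoprime (Ideal.span {b}) (Ideal.span {c}))
    (𝔮 : Ideal (𝓞 K)) (h𝔮 : 𝔮.IsPrime)
    (hc4 : 𝔮 ∣ Ideal.span {2 ^ 4 * (b ^ (2 * p) - a ^ p * c ^ p)})
    (hΔ : 𝔮 ∣ Ideal.span {2 ^ 4 * (a * b * c) ^ (2 * p)}) :
    𝔮 ∣ Ideal.span {(2 : 𝓞 K)} := by
  rw [Ideal.dvd_span_singleton] at hc4 hΔ ⊢
  by_contra h2
  have h16 : (2 : 𝓞 K) ^ 4 ∉ 𝔮 := fun h ↦ h2 (h𝔮.mem_of_pow_mem 4 h)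
  obtain ⟨hb, hac⟩ := h𝔮.mem_and_mul_mem_of_frey_invariants_mem
    ((h𝔮.mem_or_mem hΔ).resolve_left h16) ((h𝔮.mem_or_mem hc4).resolve_left h16)
  rw [Ideal.isCoprime_span_singleton_iff] at hab hbc
  rcases h𝔮.mem_or_mem hac with ha | hc
  · exact Ideal.IsPrime.notMem_of_isCoprime_of_mem hab ha hb
  · exact Ideal.IsPrime.notMem_of_isCoprime_of_mem hbc hb hc

/-- Let `K` be a number field of class number one, `p` a prime, and `a, b, c ∈ 𝓞 K` pairwise
coprime nonzero elements with `aᵖ + bᵖ + cᵖ = 0`. If a prime ideal `𝔮` of `𝓞 K` divides both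
`2⁴(b²ᵖ - aᵖcᵖ)` and `2⁴(abc)²ᵖ`, then `𝔮` divides `2 𝓞 K`. -/
theorem prime_dividing_c4_and_disc_divides_two
    (K : Type*) [Field K] [NumberField K] (hK : NumberField.classNumber K = 1)
    (p : ℕ) (hp : p.Prime)
    (a b c : 𝓞 K) (ha : a ≠ 0) (hb : b ≠ 0) (hc : c ≠ 0)
    (hab : IsCoprime (Ideal.span {a}) (Ideal.span {b}))
    (hbc : IsCoprime (Ideal.span {b}) (Ideal.span {c}))
    (hac : IsCoprime (Ideal.span {a}) (Ideal.span {c}))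
    (hfermat : a ^ p + b ^ p + c ^ p = 0)
    (𝔮 : Ideal (𝓞 K)) (h𝔮 : 𝔮.IsPrime)
    (hc4 : 𝔮 ∣ Ideal.span {2 ^ 4 * (b ^ (2 * p) - a ^ p * c ^ p)})
    (hΔ : 𝔮 ∣ Ideal.span {2 ^ 4 * (a * b * c) ^ (2 * p)}) :
    𝔮 ∣ Ideal.span {(2 : 𝓞 K)} :=
  prime_dividing_c4_and_disc_divides_two_general K p a b c hab hbc 𝔮 h𝔮 hc4 hΔ
end

section
/- For K = Q(√-7), the ray class group of modulus 𝔞^2 is trivial for each of the two prime ideals 𝔞 of O_K lying above 2. -/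
open NumberField

/-- Two nonzero integral ideals coprime to the modulus `𝔪` lie in the same ray class if
`(α) * I = (β) * J` for some `α, β ≡ 1 (mod 𝔪)`. -/
def RayEquiv {R : Type*} [CommRing R] (𝔪 I J : Ideal R) : Prop :=
  ∃ α β : R, Ideal.Quotient.mk 𝔪 α = 1 ∧ Ideal.Quotient.mk 𝔪 β = 1 ∧
    Ideal.span {α} * I = Ideal.span {β} * J

/-!
Write `ω = (1 + √-7) / 2`, so that `ω² = ω - 2` and `ω (1 - ω) = 2`. The ring `𝓞 K = ℤ[ω]` is
norm-Euclidean, hence a PID, so `I = (γ)`. A prime `𝔞` above `2` contains `ω` or `1 - ω`, and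
then `ω ≡ 2` or `ω ≡ -1 (mod 𝔞²)`; so every element of `𝓞 K` is congruent to an integer
modulo `𝔞²`. As `4 ∈ 𝔞²` and `γ ∉ 𝔞`, that integer is `≡ ±1 (mod 4)`, so `γ` or `-γ`
is a generator `≡ 1 (mod 𝔞²)`.
-/

section QuadraticField

variable {K : Type*} [Field K] [CharZero K] {d : ℚ} {α : K}

theorem linearIndependent_one_sqrt (hd : ∀ q : ℚ, q ^ 2 ≠ d) (hα : α ^ 2 = d) :
    LinearIndependent ℚ ![1, α] := by
  rw [linearIndependent_fin2]
  refine ⟨?_, fun q hq => hd q⁻¹ ?_⟩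
  · rintro (h : α = 0)
    have : ((0 : ℚ) : K) = d := by simpa [h] using hα
    exact hd 0 (by rw [zero_pow two_ne_zero]; exact_mod_cast this)
  · have hqα : (q : K) * α = 1 := by simpa [Rat.smul_def] using hq
    have : ((q⁻¹ ^ 2 : ℚ) : K) = d := by
      rw [← hα, eq_inv_of_mul_eq_one_right hqα]; push_cast; ring
    exact_mod_cast this

noncomputable def basisOneSqrt (hd : ∀ q : ℚ, q ^ 2 ≠ d) (hα : α ^ 2 = d)
    (hK : Module.finrank ℚ K = 2) : Module.Basis (Fin 2) ℚ K :=
  basisOfLinearIndependentOfCardEqFinrank (linearIndependent_one_sqrt hd hα) (by simp [hK])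

theorem coe_basisOneSqrt (hd : ∀ q : ℚ, q ^ 2 ≠ d) (hα : α ^ 2 = d)
    (hK : Module.finrank ℚ K = 2) : ⇑(basisOneSqrt hd hα hK) = ![1, α] :=
  coe_basisOfLinearIndependentOfCardEqFinrank _ _

theorem basisOneSqrt_repr_ratCast_add_mul (hd : ∀ q : ℚ, q ^ 2 ≠ d) (hα : α ^ 2 = d)
    (hK : Module.finrank ℚ K = 2) (r s : ℚ) :
    (basisOneSqrt hd hα hK).repr (r + s * α) = Finsupp.single 0 r + Finsupp.single 1 s := by
  set b := basisOneSqrt hd hα hK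
  have : (r : K) + s * α = r • b 0 + s • b 1 := by simp [b, coe_basisOneSqrt, Rat.smul_def]
  simp [this]

theorem exists_eq_ratCast_add_mul (hd : ∀ q : ℚ, q ^ 2 ≠ d) (hα : α ^ 2 = d)
    (hK : Module.finrank ℚ K = 2) (x : K) : ∃ r s : ℚ, x = r + s * α := by
  set b := basisOneSqrt hd hα hK
  refine ⟨b.repr x 0, b.repr x 1, ?_⟩
  conv_lhs => rw [← b.sum_repr x]
  simp [b, Fin.sum_univ_two, coe_basisOneSqrt, Rat.smul_def]

theorem leftMulMatrix_basisOneSqrt (hd : ∀ q : ℚ, q ^ 2 ≠ d) (hα : α ^ 2 = d)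
    (hK : Module.finrank ℚ K = 2) (r s : ℚ) :
    Algebra.leftMulMatrix (basisOneSqrt hd hα hK) (r + s * α) = !![r, d * s; s, r] := by
  have hmul : ((r : K) + s * α) * α = ((d * s : ℚ) : K) + r * α := by
    push_cast; linear_combination (s : K) * hα
  ext i j
  rw [Algebra.leftMulMatrix_eq_repr_mul, coe_basisOneSqrt]
  fin_cases j
  · fin_cases i <;> simp [basisOneSqrt_repr_ratCast_add_mul]
  · simp only [Fin.mk_one, Matrix.cons_val_one, Matrix.cons_val_zero, hmul,
      basisOneSqrt_repr_ratCast_add_mul]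
    fin_cases i <;> simp

theorem norm_ratCast_add_mul (hd : ∀ q : ℚ, q ^ 2 ≠ d) (hα : α ^ 2 = d)
    (hK : Module.finrank ℚ K = 2) (r s : ℚ) :
    Algebra.norm ℚ ((r : K) + s * α) = r ^ 2 - d * s ^ 2 := by
  rw [Algebra.norm_eq_matrix_det (basisOneSqrt hd hα hK), leftMulMatrix_basisOneSqrt,
    Matrix.det_fin_two_of]
  ring

theorem trace_ratCast_add_mul (hd : ∀ q : ℚ, q ^ 2 ≠ d) (hα : α ^ 2 = d)
    (hK : Module.finrank ℚ K = 2) (r s : ℚ) :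
    Algebra.trace ℚ K ((r : K) + s * α) = 2 * r := by
  rw [Algebra.trace_eq_matrix_trace (basisOneSqrt hd hα hK), leftMulMatrix_basisOneSqrt,
    Matrix.trace_fin_two_of]
  ring

end QuadraticField

theorem NumberField.isPrincipalIdealRing_of_exists_abs_norm_sub_lt_one {K : Type*} [Field K]
    [NumberField K] (h : ∀ ξ : K, ∃ q : 𝓞 K, |Algebra.norm ℚ (ξ - q)| < 1) :
    IsPrincipalIdealRing (𝓞 K) := by
  refine ⟨fun I => ?_⟩
  rcases eq_or_ne I ⊥ with rfl | hI
  · exact bot_isPrincipal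
  obtain ⟨γ, ⟨hγI, hγ0⟩, hmin⟩ := (measure fun x : 𝓞 K => (Algebra.norm ℤ x).natAbs).wf.has_min
    {x | x ∈ I ∧ x ≠ 0} (Submodule.exists_mem_ne_zero_of_ne_bot hI)
  refine ⟨γ, le_antisymm (fun x hx => Ideal.mem_span_singleton'.2 ?_)
    ((Ideal.span_singleton_le_iff_mem _).2 hγI)⟩
  obtain ⟨q, hq⟩ := h (x / γ)
  have hγK : (γ : K) ≠ 0 := by exact_mod_cast hγ0
  have hrem : ((x - q * γ : 𝓞 K) : K) = (x / γ - q) * γ := by push_cast; field_simp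
  have hlt : (Algebra.norm ℤ (x - q * γ)).natAbs < (Algebra.norm ℤ γ).natAbs := by
    rw [← Nat.cast_lt (α := ℚ), Nat.cast_natAbs, Nat.cast_natAbs, Int.cast_abs, Int.cast_abs,
      Algebra.coe_norm_int, Algebra.coe_norm_int, hrem, map_mul, abs_mul]
    exact mul_lt_of_lt_one_left (abs_pos.2 (Algebra.norm_ne_zero_iff.2 hγK)) hq
  have hrem0 : x - q * γ = 0 := by
    by_contra hne
    exact hmin _ ⟨I.sub_mem hx (I.mul_mem_left q hγI), hne⟩ hlt
  exact ⟨q, (sub_eq_zero.1 hrem0).symm⟩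

theorem Int.exists_eq_two_mul_add_of_seven_mul_sq_add_sq_eq {t u N : ℤ}
    (h : 7 * t ^ 2 + u ^ 2 = 28 * N) : ∃ m k : ℤ, t = 2 * m + k ∧ u = -7 * k := by
  obtain ⟨v, rfl⟩ : (7 : ℤ) ∣ u :=
    (by norm_num : Prime (7 : ℤ)).dvd_of_dvd_pow (n := 2) ⟨4 * N - t ^ 2, by linarith⟩
  have hprod : (t + v) * (t - v) = 2 * (2 * N - 4 * v ^ 2) := by linarith
  obtain ⟨m, hm⟩ : (2 : ℤ) ∣ t + v := by
    rcases Int.prime_two.dvd_or_dvd ⟨_, hprod⟩ with h2 | ⟨w, hw⟩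
    · exact h2
    · exact ⟨w + v, by linarith⟩
  exact ⟨m, -v, by linarith, by ring⟩

namespace Ideal

variable {R : Type*} [CommRing R] {𝔭 : Ideal R}

theorem exists_intCast_sub_mem_sq_of_sq_eq_sub_two (h𝔭 : 𝔭.IsPrime) {ω : R}
    (hω : ω ^ 2 = ω - 2) (h2 : (2 : R) ∈ 𝔭) : ∃ c : ℤ, ω - c ∈ 𝔭 ^ 2 := by
  have hprod : ω * (1 - ω) ∈ 𝔭 := by rwa [show ω * (1 - ω) = 2 by linear_combination -hω]
  rcases h𝔭.mem_or_mem hprod with h | h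
  · refine ⟨2, ?_⟩
    rw [Int.cast_ofNat, ← hω]
    exact pow_mem_pow h 2
  · refine ⟨-1, ?_⟩
    rw [show ω - ((-1 : ℤ) : R) = -(1 - ω) ^ 2 by push_cast; linear_combination hω]
    exact neg_mem (pow_mem_pow h 2)

theorem Quotient.mk_sq_eq_one_or_mk_neg_eq_one (h2 : (2 : R) ∈ 𝔭) {x : R} (hx : x ∉ 𝔭)
    {k : ℤ} (hk : x - k ∈ 𝔭 ^ 2) :
    Quotient.mk (𝔭 ^ 2) x = 1 ∨ Quotient.mk (𝔭 ^ 2) (-x) = 1 := by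
  have h4 : (4 : R) ∈ 𝔭 ^ 2 := by
    rw [show (4 : R) = 2 ^ 2 by norm_num]; exact pow_mem_pow h2 2
  simp only [← map_one (Quotient.mk (𝔭 ^ 2)), Quotient.eq]
  obtain ⟨j, rfl⟩ : Odd k := by
    refine Int.not_even_iff_odd.1 fun ⟨j, hj⟩ => hx ?_
    have hkp : (k : R) ∈ 𝔭 := by
      rw [hj, Int.cast_add, ← two_mul]
      exact mul_mem_right _ _ h2
    simpa using add_mem (pow_le_self two_ne_zero hk) hkp
  obtain ⟨q, rfl | rfl⟩ := Int.even_or_odd' j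
  · left
    convert add_mem hk (mul_mem_right (q : R) _ h4) using 1
    push_cast; ring
  · right
    convert neg_mem (add_mem hk (mul_mem_right (q + 1 : R) _ h4)) using 1
    push_cast; ring

end Ideal

namespace SqrtNegSeven

variable {K : Type*} [Field K] [NumberField K] {α : K}

open Polynomial in
def halfOneAdd (hα : α ^ 2 = -7) : 𝓞 K :=
  ⟨(1 + α) / 2, ⟨X ^ 2 - X + C 2, by monicity!, by simp; linear_combination hα / 4⟩⟩

theorem coe_halfOneAdd (hα : α ^ 2 = -7) : (halfOneAdd hα : K) = (1 + α) / 2 := rfl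

theorem halfOneAdd_sq (hα : α ^ 2 = -7) : halfOneAdd hα ^ 2 = halfOneAdd hα - 2 := by
  ext
  push_cast [map_ofNat, coe_halfOneAdd]
  linear_combination hα / 4

theorem exists_eq_intCast_add_mul_halfOneAdd (hα : α ^ 2 = -7) (hK : Module.finrank ℚ K = 2)
    (x : 𝓞 K) : ∃ m k : ℤ, x = m + k * halfOneAdd hα := by
  have hd : ∀ q : ℚ, q ^ 2 ≠ -7 := fun q => by nlinarith [sq_nonneg q]
  have hα' : α ^ 2 = ((-7 : ℚ) : K) := by exact_mod_cast hα
  obtain ⟨r, s, hx⟩ := exists_eq_ratCast_add_mul hd hα' hK (x : K)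
  set a : 𝓞 K := 2 * halfOneAdd hα - 1
  have hxa : ((x * a : 𝓞 K) : K) = ((-7 * s : ℚ) : K) + r * α := by
    push_cast [a, map_ofNat, coe_halfOneAdd, hx]
    linear_combination (s : K) * hα
  -- `Tr x = 2r`, `Tr (x √-7) = -14s` and `N x = r² + 7s²` are integers
  have ht := Algebra.coe_trace_int x
  have hu := Algebra.coe_trace_int (x * a)
  have hN := Algebra.coe_norm_int x
  rw [hx, trace_ratCast_add_mul hd hα' hK] at ht
  rw [hxa, trace_ratCast_add_mul hd hα' hK] at hu
  rw [hx, norm_ratCast_add_mul hd hα' hK] at hN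
  obtain ⟨m, k, htk, huk⟩ := Int.exists_eq_two_mul_add_of_seven_mul_sq_add_sq_eq
    (t := Algebra.trace ℤ _ x) (u := Algebra.trace ℤ _ (x * a)) (N := Algebra.norm ℤ x)
    (by qify; rw [ht, hu, hN]; ring)
  have hr : r = m + k / 2 := by qify at htk; linarith
  have hs : s = k / 2 := by qify at huk; linarith
  refine ⟨m, k, RingOfIntegers.ext ?_⟩
  push_cast [map_intCast, coe_halfOneAdd, hx, hr, hs]
  ring

theorem exists_abs_norm_sub_lt_one (hα : α ^ 2 = -7) (hK : Module.finrank ℚ K = 2) (ξ : K) :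
    ∃ q : 𝓞 K, |Algebra.norm ℚ (ξ - q)| < 1 := by
  have hd : ∀ q : ℚ, q ^ 2 ≠ -7 := fun q => by nlinarith [sq_nonneg q]
  have hα' : α ^ 2 = ((-7 : ℚ) : K) := by exact_mod_cast hα
  obtain ⟨r, s, rfl⟩ := exists_eq_ratCast_add_mul hd hα' hK ξ
  set n := round (2 * s)
  set m := round (r - n / 2)
  refine ⟨m + n * halfOneAdd hα, ?_⟩
  have hdiff : (r : K) + s * α - ((m + n * halfOneAdd hα : 𝓞 K) : K) =
      ((r - m - n / 2 : ℚ) : K) + ((s - n / 2 : ℚ) : K) * α := by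
    push_cast [map_intCast, coe_halfOneAdd]
    ring
  have hn := abs_le.1 (abs_sub_round (2 * s))
  have hm := abs_le.1 (abs_sub_round (r - n / 2))
  -- the norm of the error is at most `(1/2)² + 7 (1/4)² = 11/16`
  rw [hdiff, norm_ratCast_add_mul hd hα' hK, abs_lt]
  constructor <;> nlinarith [sq_nonneg ((r : ℚ) - m - n / 2), sq_nonneg ((s : ℚ) - n / 2)]

end SqrtNegSeven

theorem rayClassGroup_trivial_sqrt_neg_seven_general
    (K : Type*) [Field K] [NumberField K] (α : K) (hα : α ^ 2 = -7)
    (hK : Module.finrank ℚ K = 2)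
    (𝔞 : Ideal (𝓞 K)) (h𝔞 : 𝔞.IsPrime) (h𝔞2 : 𝔞 ∣ Ideal.span {(2 : 𝓞 K)})
    (I : Ideal (𝓞 K)) (hcop : IsCoprime I (𝔞 ^ 2)) :
    ∃ β : 𝓞 K, I = Ideal.span {β} ∧ Ideal.Quotient.mk (𝔞 ^ 2) β = 1 := by
  have := isPrincipalIdealRing_of_exists_abs_norm_sub_lt_one
    (SqrtNegSeven.exists_abs_norm_sub_lt_one hα hK)
  obtain ⟨γ, rfl⟩ := Submodule.IsPrincipal.principal I
  have h2 : (2 : 𝓞 K) ∈ 𝔞 := Ideal.le_of_dvd h𝔞2 (Ideal.mem_span_singleton_self 2)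
  have hγ : γ ∉ 𝔞 := by
    intro hγ
    have hcop' := (IsCoprime.pow_right_iff two_pos).1 hcop
    rw [Ideal.isCoprime_iff_sup_eq, sup_eq_right.2 ((Ideal.span_singleton_le_iff_mem _).2 hγ)]
      at hcop'
    exact h𝔞.ne_top hcop'
  obtain ⟨c, hc⟩ :=
    Ideal.exists_intCast_sub_mem_sq_of_sq_eq_sub_two h𝔞 (SqrtNegSeven.halfOneAdd_sq hα) h2
  obtain ⟨m, n, rfl⟩ := SqrtNegSeven.exists_eq_intCast_add_mul_halfOneAdd hα hK γ
  have hk : (m + n * SqrtNegSeven.halfOneAdd hα) - ((m + n * c : ℤ) : 𝓞 K) ∈ 𝔞 ^ 2 := by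
    convert (𝔞 ^ 2).mul_mem_left (n : 𝓞 K) hc using 1
    push_cast; ring
  rcases Ideal.Quotient.mk_sq_eq_one_or_mk_neg_eq_one h2 hγ hk with h | h
  exacts [⟨_, rfl, h⟩, ⟨_, (Ideal.span_singleton_neg _).symm, h⟩]

/-- For `K = ℚ(√-7)`, the ray class group of modulus `𝔞²` is trivial for each of the two
prime ideals `𝔞` of `𝓞 K` lying above `2`: every nonzero ideal coprime to `𝔞²` is principal,
generated by an element congruent to `1 mod 𝔞²`. -/
theorem rayClassGroup_trivial_sqrt_neg_seven
    (K : Type*) [Field K] [NumberField K] (α : K) (hα : α ^ 2 = -7)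
    (hK : Module.finrank ℚ K = 2)
    (𝔞 : Ideal (𝓞 K)) (h𝔞 : 𝔞.IsPrime) (h𝔞2 : 𝔞 ∣ Ideal.span {(2 : 𝓞 K)})
    (I : Ideal (𝓞 K)) (hI : I ≠ 0) (hcop : IsCoprime I (𝔞 ^ 2)) :
    ∃ β : 𝓞 K, I = Ideal.span {β} ∧ Ideal.Quotient.mk (𝔞 ^ 2) β = 1 :=
  rayClassGroup_trivial_sqrt_neg_seven_general K α hα hK 𝔞 h𝔞 h𝔞2 I hcop
end

section
/- For K = Q(i) with 𝔞 the unique prime above 2, the ray class group of modulus 𝔞^4 is isomorphic to Z/2Z; for K = Q(√-2) with 𝔞 the unique prime above 2, the ray class group of modulus 𝔞^4 is isomorphic to Z/4Z. -/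
open NumberField

/-- The ray class group of modulus `𝔪` of a number field `K` is isomorphic to `ℤ/nℤ`:
there is a labelling of the nonzero ideals coprime to `𝔪` by `ℤ/nℤ` which is surjective,
additive on products, and whose fibres are exactly the ray classes. -/
def RayClassGroupIsoZMod (K : Type*) [Field K] [NumberField K] (𝔪 : Ideal (𝓞 K))
    (n : ℕ) : Prop :=
  ∃ f : {I : Ideal (𝓞 K) // I ≠ 0 ∧ IsCoprime I 𝔪} → ZMod n,
    Function.Surjective f ∧
    (∀ I J : {I : Ideal (𝓞 K) // I ≠ 0 ∧ IsCoprime I 𝔪},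
      f ⟨I.1 * J.1, mul_ne_zero I.2.1 J.2.1, I.2.2.mul_left J.2.2⟩ = f I + f J) ∧
    (∀ I J : {I : Ideal (𝓞 K) // I ≠ 0 ∧ IsCoprime I 𝔪},
      (f I = f J ↔ RayEquiv 𝔪 I.1 J.1))

/-!
`𝓞_K ≅ ℤ[√d]` (`d = -1, -2`), a Euclidean ring in which `2` is a unit times `p²` for
`p = 1 + i`, resp. `√-2`; hence `𝔞 = (p)` and `𝔞⁴ = (4)`. In a principal ideal domain `R`,
sending `(x)` to the class of `x` in `(R/𝔪)ˣ / image(Rˣ)` identifies the ray class group of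
modulus `𝔪` with that quotient. Here `(ℤ[√d]/4)ˣ` has order `8`, and the image of the global
units `±1, ±i`, resp. `±1`, is the kernel of an explicit character of `(ℤ[√d]/4)ˣ` onto `ℤ/2`,
resp. `ℤ/4`.
-/

section RayClass

variable {R Q : Type*} [CommRing R] [CommRing Q]

-- The body of `RayClassGroupIsoZMod`, for an arbitrary domain.
def Ideal.RayClassGroupIsoZMod [IsDomain R] (𝔪 : Ideal R) (n : ℕ) : Prop :=
  ∃ f : {I : Ideal R // I ≠ 0 ∧ IsCoprime I 𝔪} → ZMod n,
    Function.Surjective f ∧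
    (∀ I J : {I : Ideal R // I ≠ 0 ∧ IsCoprime I 𝔪},
      f ⟨I.1 * J.1, mul_ne_zero I.2.1 J.2.1, I.2.2.mul_left J.2.2⟩ = f I + f J) ∧
    (∀ I J : {I : Ideal R // I ≠ 0 ∧ IsCoprime I 𝔪},
      (f I = f J ↔ RayEquiv 𝔪 I.1 J.1))

variable {π : R →+* Q}

theorem isCoprime_span_singleton_ker_iff (hπ : Function.Surjective π) (x : R) :
    IsCoprime (Ideal.span {x}) (RingHom.ker π) ↔ IsUnit (π x) := by
  rw [Ideal.isCoprime_iff_sup_eq, Ideal.eq_top_iff_one, Ideal.mem_span_singleton_sup]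
  constructor
  · rintro ⟨a, b, hb, hab⟩
    refine .of_mul_eq_one_right (π a) ?_
    rw [← map_mul, eq_sub_of_add_eq hab, map_sub, map_one, (RingHom.mem_ker).1 hb, sub_zero]
  · rintro ⟨u, hu⟩
    obtain ⟨a, ha⟩ := hπ ↑u⁻¹
    refine ⟨a, 1 - a * x, ?_, by ring⟩
    rw [RingHom.mem_ker, map_sub, map_one, map_mul, ha, ← hu, Units.inv_mul, sub_self]

theorem Ideal.Quotient.mk_ker_eq_one_iff {x : R} :
    Ideal.Quotient.mk (RingHom.ker π) x = 1 ↔ π x = 1 := by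
  rw [← map_one (Ideal.Quotient.mk _), Ideal.Quotient.eq, RingHom.sub_mem_ker_iff, map_one]

theorem rayEquiv_ker_span_singleton_iff [IsDomain R] (hπ : Function.Surjective π) {x y : R}
    (hy : IsUnit (π y)) :
    RayEquiv (RingHom.ker π) (Ideal.span {x}) (Ideal.span {y}) ↔
      ∃ u : Rˣ, π x * π u = π y := by
  simp only [RayEquiv, Ideal.Quotient.mk_ker_eq_one_iff, Ideal.span_singleton_mul_span_singleton,
    Ideal.span_singleton_eq_span_singleton]
  constructor
  · rintro ⟨α, β, hα, hβ, u, hu⟩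
    exact ⟨u, by simpa [hα, hβ] using congrArg π hu⟩
  · rintro ⟨u, hu⟩
    obtain ⟨z, hz⟩ := hπ ↑hy.unit⁻¹
    have hyz : π y * π z = 1 := by rw [hz, IsUnit.mul_val_inv]
    refine ⟨y * z, x * z * u, ?_, ?_, u, by ring⟩
    · rw [map_mul, hyz]
    · rw [map_mul, map_mul, mul_right_comm, hu, hyz]

theorem apply_isUnit_unit_eq_iff {n : ℕ} {χ : Qˣ →* Multiplicative (ZMod n)}
    (hker : χ.ker = (Units.map (π : R →* Q)).range) {x y : R} (hx : IsUnit (π x))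
    (hy : IsUnit (π y)) : χ hx.unit = χ hy.unit ↔ ∃ u : Rˣ, π x * π u = π y := by
  rw [eq_comm, χ.eq_iff, hker]
  simp only [MonoidHom.mem_range, eq_inv_mul_iff_mul_eq, Units.ext_iff, Units.val_mul,
    IsUnit.unit_spec, Units.coe_map, MonoidHom.coe_coe]

open Submodule.IsPrincipal in
theorem rayClassGroupIsoZMod_ker_of_unitsChar [IsDomain R] [IsPrincipalIdealRing R]
    [Nontrivial Q] {n : ℕ} {χ : Qˣ →* Multiplicative (ZMod n)} (hπ : Function.Surjective π)
    (hχ : Function.Surjective χ) (hker : χ.ker = (Units.map (π : R →* Q)).range) :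
    (RingHom.ker π).RayClassGroupIsoZMod n := by
  have of_span_eq {x y : R} (h : Ideal.span {x} = Ideal.span {y}) :
      ∃ u : Rˣ, π x * π u = π y := by
    obtain ⟨u, hu⟩ := Ideal.span_singleton_eq_span_singleton.1 h
    exact ⟨u, by rw [← map_mul, hu]⟩
  have span_gen (I : Ideal R) : Ideal.span {generator I} = I := Ideal.span_singleton_generator I
  have isUnit_gen (I : {I : Ideal R // I ≠ 0 ∧ IsCoprime I (RingHom.ker π)}) :
      IsUnit (π (generator I.1)) := by
    rw [← isCoprime_span_singleton_ker_iff hπ, span_gen]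
    exact I.2.2
  refine ⟨fun I => Multiplicative.toAdd (χ (isUnit_gen I).unit), fun c => ?_, fun I J => ?_,
    fun I J => ?_⟩ <;> dsimp only
  · obtain ⟨u, hu⟩ := hχ (Multiplicative.ofAdd c)
    obtain ⟨x, hx⟩ := hπ u
    have hxu : IsUnit (π x) := hx ▸ u.isUnit
    have hx0 : x ≠ 0 := by
      rintro rfl
      exact not_isUnit_zero (M₀ := Q) (by rwa [map_zero] at hxu)
    refine ⟨⟨Ideal.span {x}, by simpa using hx0, (isCoprime_span_singleton_ker_iff hπ x).2 hxu⟩, ?_⟩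
    rw [(apply_isUnit_unit_eq_iff hker _ hxu).2 (of_span_eq (span_gen _)),
      show hxu.unit = u from Units.ext hx, hu, toAdd_ofAdd]
  · have hIJ : IsUnit (π (generator I.1 * generator J.1)) := by
      rw [map_mul]
      exact (isUnit_gen I).mul (isUnit_gen J)
    have hunit_mul : hIJ.unit = (isUnit_gen I).unit * (isUnit_gen J).unit := Units.ext (by simp)
    rw [← toAdd_mul, ← map_mul, ← hunit_mul,
      (apply_isUnit_unit_eq_iff hker _ hIJ).2 (of_span_eq ?_)]
    rw [span_gen, ← Ideal.span_singleton_mul_span_singleton, span_gen, span_gen]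
  · rw [Multiplicative.toAdd.injective.eq_iff, apply_isUnit_unit_eq_iff hker,
      ← rayEquiv_ker_span_singleton_iff hπ (isUnit_gen J), span_gen, span_gen]

end RayClass

theorem Ideal.IsPrime.eq_span_singleton_of_pow_mem {R : Type*} [CommRing R]
    [IsPrincipalIdealRing R] {𝔞 : Ideal R} (h𝔞 : 𝔞.IsPrime) {p : R} (hp : Irreducible p) {k : ℕ}
    (hk : p ^ k ∈ 𝔞) : 𝔞 = Ideal.span {p} :=
  ((PrincipalIdealRing.isMaximal_of_irreducible hp).eq_of_le h𝔞.ne_top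
    ((Ideal.span_singleton_le_iff_mem 𝔞).2 (h𝔞.mem_of_pow_mem k hk))).symm

theorem MonoidHom.surjective_of_exists_apply_eq_ofAdd_one {G : Type*} [Group G] {n : ℕ}
    (χ : G →* Multiplicative (ZMod n)) (h : ∃ g, χ g = .ofAdd 1) : Function.Surjective χ := by
  obtain ⟨g, hg⟩ := h
  exact fun c => ⟨g ^ ((Multiplicative.toAdd c).cast : ℤ), by
    rw [map_zpow, hg, ← ofAdd_zsmul, zsmul_one, ZMod.intCast_zmod_cast, ofAdd_toAdd]⟩

theorem Int.exists_sq_two_mul_sub_mul_le (c : ℤ) {n : ℤ} (hn : 0 < n) :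
    ∃ q : ℤ, (2 * (c - q * n)) ^ 2 ≤ n ^ 2 := by
  refine ⟨(2 * c + n) / (2 * n), sq_le_sq' ?_ ?_⟩ <;>
  · have := Int.emod_add_mul_ediv (2 * c + n) (2 * n)
    have := Int.emod_nonneg (2 * c + n) (by omega : 2 * n ≠ 0)
    have := Int.emod_lt_of_pos (2 * c + n) (by omega : 0 < 2 * n)
    linarith

open Polynomial in
theorem isIntegral_of_sq_eq_intCast {A : Type*} [Ring A] {x : A} {N : ℤ} (h : x ^ 2 = N) :
    IsIntegral ℤ x :=
  ⟨X ^ 2 - C N, monic_X_pow_sub_C _ two_ne_zero, by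
    rw [eval₂_sub, eval₂_X_pow, eval₂_C, h, eq_intCast, sub_self]⟩

theorem Rat.exists_eq_intCast_of_sq_eq_intCast {q : ℚ} {N : ℤ} (h : q ^ 2 = N) :
    ∃ t : ℤ, q = t := by
  obtain ⟨t, ht⟩ := IsIntegrallyClosed.isIntegral_iff.1 (isIntegral_of_sq_eq_intCast h)
  exact ⟨t, ht.symm⟩

theorem Rat.exists_intCast_of_two_mul_of_sq_sub_mul_sq {d : ℤ} (hd : d = -1 ∨ d = -2) {a b : ℚ}
    {T N : ℤ} (hT : 2 * a = T) (hN : a ^ 2 - d * b ^ 2 = N) :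
    (∃ a' : ℤ, a = a') ∧ ∃ b' : ℤ, b = b' := by
  have hdisc : -d * (2 * b) ^ 2 = 4 * N - T ^ 2 := by
    rw [← hN, ← hT]
    ring
  obtain ⟨k, hk⟩ : ∃ k : ℤ, 2 * b = k := by
    rcases hd with rfl | rfl
    · exact Rat.exists_eq_intCast_of_sq_eq_intCast (N := 4 * N - T ^ 2)
        (by push_cast at hdisc ⊢; linarith)
    · obtain ⟨t, ht⟩ := Rat.exists_eq_intCast_of_sq_eq_intCast (q := 2 * (2 * b))
        (N := 2 * (4 * N - T ^ 2)) (by push_cast at hdisc ⊢; linarith)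
      have ht2 : t ^ 2 = 2 * (4 * N - T ^ 2) := by
        exact_mod_cast (by rw [← ht]; push_cast at hdisc ⊢; linarith :
          (t : ℚ) ^ 2 = 2 * (4 * N - T ^ 2))
      obtain ⟨s, rfl⟩ := (Int.even_pow' two_ne_zero).1 ⟨_, ht2.trans (two_mul _)⟩
      exact ⟨s, by push_cast at ht; linarith⟩
  have hTk : T ^ 2 - d * k ^ 2 = 4 * N := by
    exact_mod_cast (by rw [← hT, ← hk]; linear_combination 4 * hN : (T : ℚ) ^ 2 - d * k ^ 2 = 4 * N)
  -- `T² - d k² ≡ 0 (mod 4)` forces `T` and `k` to be even when `d ≡ -1, -2 (mod 4)`.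
  have hmod : ((T ^ 2 - d * k ^ 2 : ℤ) : ZMod 4) = 0 :=
    (ZMod.intCast_zmod_eq_zero_iff_dvd _ 4).2 ⟨N, hTk⟩
  have heven : (2 * T : ZMod 4) = 0 ∧ (2 * k : ZMod 4) = 0 := by
    push_cast at hmod
    rcases hd with rfl | rfl
    · exact (by decide : ∀ x y : ZMod 4, x ^ 2 - ((-1 : ℤ) : ZMod 4) * y ^ 2 = 0 →
        2 * x = 0 ∧ 2 * y = 0) _ _ hmod
    · exact (by decide : ∀ x y : ZMod 4, x ^ 2 - ((-2 : ℤ) : ZMod 4) * y ^ 2 = 0 →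
        2 * x = 0 ∧ 2 * y = 0) _ _ hmod
  have h4T := (ZMod.intCast_zmod_eq_zero_iff_dvd (2 * T) 4).1 (by push_cast; exact heven.1)
  have h4k := (ZMod.intCast_zmod_eq_zero_iff_dvd (2 * k) 4).1 (by push_cast; exact heven.2)
  obtain ⟨T', rfl⟩ : 2 ∣ T := by omega
  obtain ⟨k', rfl⟩ : 2 ∣ k := by omega
  push_cast at hT hk
  exact ⟨⟨T', by linarith⟩, ⟨k', by linarith⟩⟩

theorem exists_eq_algebraMap_add_algebraMap_mul {F K : Type*} [Field F] [Field K] [Algebra F K]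
    (hrank : Module.finrank F K = 2) {α : K} (hα : α ∉ Set.range (algebraMap F K)) (x : K) :
    ∃ a b : F, x = algebraMap F K a + algebraMap F K b * α := by
  have hli : LinearIndependent F ![1, α] := by
    refine LinearIndependent.pair_iff.2 fun s t hst => ?_
    by_cases ht : t = 0
    · subst ht
      simpa using hst
    · refine absurd ⟨-s / t, ?_⟩ hα
      rw [Algebra.smul_def, Algebra.smul_def, mul_one] at hst
      rw [map_div₀, map_neg, div_eq_iff ((map_ne_zero _).2 ht)]
      linear_combination -hst
  let b := basisOfLinearIndependentOfCardEqFinrank hli (by simp [hrank])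
  refine ⟨b.repr x 0, b.repr x 1, ?_⟩
  conv_lhs => rw [← b.sum_repr x]
  simp [b, Fin.sum_univ_two, Algebra.smul_def]

open Polynomial in
theorem exists_int_two_mul_and_sq_sub_mul_sq_of_isIntegral {K : Type*} [Field K] [CharZero K]
    {d : ℤ} (hd0 : d < 0) {α : K} (hα : α ^ 2 = d) {x : K} (hx : IsIntegral ℤ x) {a b : ℚ}
    (hab : x = algebraMap ℚ K a + algebraMap ℚ K b * α) :
    (∃ T : ℤ, 2 * a = T) ∧ ∃ N : ℤ, a ^ 2 - d * b ^ 2 = N := by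
  by_cases hb : b = 0
  · rw [hb, map_zero, zero_mul, add_zero] at hab
    obtain ⟨t, rfl⟩ := IsIntegrallyClosed.isIntegral_iff.1
      ((isIntegral_algebraMap_iff (algebraMap ℚ K).injective).1 (hab ▸ hx))
    exact ⟨⟨2 * t, by simp⟩, ⟨t ^ 2, by simp [hb]⟩⟩
  set P : ℚ[X] := X ^ 2 - C (2 * a) * X + C (a ^ 2 - d * b ^ 2) with hP
  have hPdeg : P.natDegree = 2 := by rw [hP]; compute_degree!
  have hirr : Irreducible P := by
    refine irreducible_of_degree_le_three_of_not_isRoot (by simp [hPdeg]) fun r hr => ?_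
    have : (r - a) ^ 2 - d * b ^ 2 = 0 := by
      simp only [hP, IsRoot, eval_add, eval_sub, eval_pow, eval_mul, eval_X, eval_C] at hr
      linear_combination hr
    have : (0 : ℚ) < -d := by exact_mod_cast neg_pos.2 hd0
    nlinarith [sq_nonneg (r - a), mul_pos this (pow_pos (abs_pos.2 hb) 2), sq_abs b]
  have hroot : aeval x P = 0 := by
    simp only [hP, map_add, map_sub, map_mul, map_pow, aeval_X, aeval_C, hab]
    rw [map_intCast, ← hα, map_ofNat]
    ring
  have hmin := minpoly.eq_of_irreducible_of_monic hirr hroot (by rw [hP]; monicity!)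
  rw [minpoly.isIntegrallyClosed_eq_field_fractions' ℚ hx] at hmin
  have hcoeff (i : ℕ) : ∃ c : ℤ, P.coeff i = c := ⟨_, by rw [hmin, coeff_map]; rfl⟩
  obtain ⟨T, hT⟩ := hcoeff 1
  obtain ⟨N, hN⟩ := hcoeff 0
  simp only [hP, coeff_add, coeff_sub, coeff_C_mul, coeff_X_pow, coeff_X, coeff_C] at hT hN
  norm_num at hT hN
  exact ⟨⟨-T, by push_cast; linarith⟩, ⟨N, hN⟩⟩

instance {R : Type*} [Fintype R] (a b : R) : Fintype (QuadraticAlgebra R a b) :=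
  Fintype.ofEquiv _ (QuadraticAlgebra.equivProd a b).symm

namespace Zsqrtd

variable {d : ℤ}

theorem exists_norm_sub_mul_lt (hd : -2 ≤ d) (hd0 : d < 0) (x : ℤ√d) {y : ℤ√d} (hy : y ≠ 0) :
    ∃ q : ℤ√d, (x - q * y).norm < y.norm := by
  have hn : 0 < y.norm := (norm_nonneg hd0.le y).lt_of_ne' (mt (norm_eq_zero_iff hd0 y).1 hy)
  set c := x * star y
  -- `q` rounds the coordinates of `x / y = c / N(y)`.
  obtain ⟨q₁, hq₁⟩ := Int.exists_sq_two_mul_sub_mul_le c.re hn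
  obtain ⟨q₂, hq₂⟩ := Int.exists_sq_two_mul_sub_mul_le c.im hn
  refine ⟨⟨q₁, q₂⟩, ?_⟩
  have key : (x - ⟨q₁, q₂⟩ * y).norm * y.norm =
      (c.re - q₁ * y.norm) ^ 2 - d * (c.im - q₂ * y.norm) ^ 2 :=
    calc (x - ⟨q₁, q₂⟩ * y).norm * y.norm = ((x - ⟨q₁, q₂⟩ * y) * star y).norm := by
          rw [norm_mul, norm_conj]
      _ = (c - ⟨q₁, q₂⟩ * (y.norm : ℤ√d)).norm := by rw [sub_mul, mul_assoc, ← norm_eq_mul_conj]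
      _ = _ := by
          simp only [norm_def, re_sub, im_sub, re_mul, im_mul, re_intCast, im_intCast]
          ring
  nlinarith [norm_nonneg hd0.le (x - ⟨q₁, q₂⟩ * y)]

theorem isPrincipalIdealRing_of_neg_two_le (hd : -2 ≤ d) (hd0 : d < 0) :
    IsPrincipalIdealRing (ℤ√d) := by
  refine ⟨fun I => ?_⟩
  by_cases hI : I = ⊥
  · exact hI ▸ bot_isPrincipal
  obtain ⟨y, ⟨hyI, hy0⟩, hmin⟩ := (measure fun y : ℤ√d => y.norm.natAbs).wf.has_min
    {y | y ∈ I ∧ y ≠ 0} (Submodule.exists_mem_ne_zero_of_ne_bot hI)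
  refine ⟨y, _root_.le_antisymm (fun x hx => ?_) ((Ideal.span_singleton_le_iff_mem I).2 hyI)⟩
  obtain ⟨q, hq⟩ := exists_norm_sub_mul_lt hd hd0 x hy0
  have hr : x - q * y = 0 := by
    by_contra hr
    refine hmin _ ⟨I.sub_mem hx (I.mul_mem_left q hyI), hr⟩ ?_
    have := norm_nonneg hd0.le (x - q * y)
    show (x - q * y).norm.natAbs < y.norm.natAbs
    omega
  exact Ideal.mem_span_singleton'.2 ⟨q, (sub_eq_zero.1 hr).symm⟩

theorem re_mul_im_eq_zero_of_isUnit (hd0 : d < 0) {u : ℤ√d} (hu : IsUnit u) :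
    u.re * u.im = 0 := by
  have h := (norm_eq_one_iff' hd0.le u).2 hu
  rw [norm_def] at h
  rcases eq_or_ne u.im 0 with him | him
  · rw [him, mul_zero]
  · have : 1 ≤ u.im * u.im := by nlinarith [mul_self_pos.2 him]
    have hre : u.re * u.re = 0 := by nlinarith [mul_self_nonneg u.re]
    rw [mul_self_eq_zero.1 hre, zero_mul]

theorem irreducible_of_norm_eq_two (hd : d ≤ 0) {p : ℤ√d} (hp : p.norm = 2) : Irreducible p := by
  refine ⟨fun h => by simp [← norm_eq_one_iff' hd, hp] at h, fun a b hab => ?_⟩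
  have hn : a.norm * b.norm = 2 := by rw [← norm_mul, ← hab, hp]
  simp only [← norm_eq_one_iff' hd]
  have ha0 : a.norm ≠ 0 := by rintro h; simp [h] at hn
  have ha2 : a.norm ≤ 2 := Int.le_of_dvd two_pos (Dvd.intro _ hn)
  obtain h | h : a.norm = 1 ∨ a.norm = 2 := by have := norm_nonneg hd a; omega
  · exact Or.inl h
  · rw [h] at hn
    exact Or.inr (by omega)

theorem nonempty_ringEquiv_ringOfIntegers (hd : d = -1 ∨ d = -2) {K : Type*} [Field K]
    [NumberField K] {α : K} (hα : α ^ 2 = d) (hrank : Module.finrank ℚ K = 2) :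
    Nonempty (ℤ√d ≃+* 𝓞 K) := by
  have hd0 : d < 0 := by omega
  let θ : 𝓞 K := ⟨α, isIntegral_of_sq_eq_intCast hα⟩
  have hθ : θ * θ = d := by
    apply RingOfIntegers.ext
    push_cast
    exact (sq α).symm.trans hα
  let e := lift ⟨θ, hθ⟩
  have he (z : ℤ√d) : (e z : K) = z.re + z.im * α := by
    simp only [e, lift_apply_apply]
    push_cast
    rfl
  have hα' : α ∉ Set.range (algebraMap ℚ K) := by
    rintro ⟨r, rfl⟩
    have : r ^ 2 = d := (algebraMap ℚ K).injective (by simpa using hα)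
    have : (d : ℚ) < 0 := by exact_mod_cast hd0
    nlinarith [sq_nonneg r]
  refine ⟨.ofBijective e ⟨lift_injective _ fun n hn => by nlinarith [mul_self_nonneg n],
    fun x => ?_⟩⟩
  obtain ⟨a, b, hab⟩ := exists_eq_algebraMap_add_algebraMap_mul hrank hα' x
  obtain ⟨⟨T, hT⟩, ⟨N, hN⟩⟩ :=
    exists_int_two_mul_and_sq_sub_mul_sq_of_isIntegral hd0 hα x.isIntegral_coe hab
  obtain ⟨⟨a', rfl⟩, ⟨b', rfl⟩⟩ := Rat.exists_intCast_of_two_mul_of_sq_sub_mul_sq hd hT hN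
  exact ⟨⟨a', b'⟩, RingOfIntegers.ext (by simp [he, hab])⟩

theorem pow_four_eq_span_four_of_ringEquiv {S : Type*} [CommRing S] [IsDomain S]
    (hd : -2 ≤ d) (hd0 : d < 0) (e : ℤ√d ≃+* S) {p : ℤ√d} (hp : p.norm = 2)
    (hp2 : Associated (p ^ 2) 2) {𝔞 : Ideal S} (h𝔞 : 𝔞.IsPrime) (h2 : 𝔞 ∣ Ideal.span {2}) :
    𝔞 ^ 4 = Ideal.span {4} := by
  have := isPrincipalIdealRing_of_neg_two_le hd hd0
  have := IsPrincipalIdealRing.of_surjective (e : ℤ√d →+* S) e.surjective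
  have hass : Associated (e p ^ 2) 2 := by simpa [map_ofNat] using hp2.map e
  have hirr : Irreducible (e p) :=
    (MulEquiv.irreducible_iff (e : ℤ√d ≃* S)).2 (irreducible_of_norm_eq_two hd0.le hp)
  have hmem : e p ^ 2 ∈ 𝔞 :=
    Ideal.mem_of_dvd _ hass.symm.dvd (Ideal.le_of_dvd h2 (Ideal.mem_span_singleton_self 2))
  rw [h𝔞.eq_span_singleton_of_pow_mem hirr hmem, Ideal.span_singleton_pow,
    Ideal.span_singleton_eq_span_singleton]
  simpa [← pow_mul, show (2 : S) ^ 2 = 4 by norm_num] using hass.pow_pow (n := 2)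

def toQuadraticAlgebra (d : ℤ) (m : ℕ) : ℤ√d →+* QuadraticAlgebra (ZMod m) d 0 :=
  lift ⟨QuadraticAlgebra.omega, by ext <;> simp⟩

@[simp]
theorem toQuadraticAlgebra_apply (m : ℕ) (z : ℤ√d) :
    toQuadraticAlgebra d m z = ⟨z.re, z.im⟩ := by
  ext <;> simp [toQuadraticAlgebra]

theorem toQuadraticAlgebra_surjective (m : ℕ) : Function.Surjective (toQuadraticAlgebra d m) := by
  rintro ⟨a, b⟩
  obtain ⟨a', rfl⟩ := ZMod.intCast_surjective a
  obtain ⟨b', rfl⟩ := ZMod.intCast_surjective b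
  exact ⟨⟨a', b'⟩, by simp⟩

theorem ker_toQuadraticAlgebra (m : ℕ) :
    RingHom.ker (toQuadraticAlgebra d m) = Ideal.span {(m : ℤ√d)} := by
  ext z
  rw [RingHom.mem_ker, Ideal.mem_span_singleton, ← Int.cast_natCast, intCast_dvd,
    toQuadraticAlgebra_apply]
  simp [QuadraticAlgebra.ext_iff, ZMod.intCast_zmod_eq_zero_iff_dvd]

theorem rayClassGroupIsoZMod_span_natCast_of_ringEquiv {S : Type*} [CommRing S] [IsDomain S]
    (hd : -2 ≤ d) (hd0 : d < 0) (e : ℤ√d ≃+* S) {m n : ℕ} (hm : m ≠ 1)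
    {χ : (QuadraticAlgebra (ZMod m) d 0)ˣ →* Multiplicative (ZMod n)}
    (hχ : Function.Surjective χ)
    (hker : χ.ker = (Units.map (toQuadraticAlgebra d m : ℤ√d →* _)).range) :
    (Ideal.span {(m : S)}).RayClassGroupIsoZMod n := by
  have := isPrincipalIdealRing_of_neg_two_le hd hd0
  have := IsPrincipalIdealRing.of_surjective (e : ℤ√d →+* S) e.surjective
  have := ZMod.nontrivial_iff.2 hm
  let π := (toQuadraticAlgebra d m).comp (e.symm : S →+* ℤ√d)
  have hker_π : RingHom.ker π = Ideal.span {(m : S)} := by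
    rw [← RingHom.comap_ker, ker_toQuadraticAlgebra, Ideal.comap_coe, Ideal.comap_symm,
      Ideal.map_span, Set.image_singleton, map_natCast]
  have hrange : (Units.map (π : S →* QuadraticAlgebra (ZMod m) d 0)).range =
      (Units.map (toQuadraticAlgebra d m : ℤ√d →* QuadraticAlgebra (ZMod m) d 0)).range := by
    ext u
    simp only [MonoidHom.mem_range]
    constructor
    · rintro ⟨v, rfl⟩
      exact ⟨Units.map (e.symm : S →* ℤ√d) v, Units.ext rfl⟩
    · rintro ⟨v, rfl⟩
      exact ⟨Units.map (e : ℤ√d →* S) v, Units.ext (by simp [π])⟩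
  rw [← hker_π]
  exact rayClassGroupIsoZMod_ker_of_unitsChar
    ((toQuadraticAlgebra_surjective m).comp e.symm.surjective) hχ (hker.trans hrange.symm)

local notation "Q₋₁" => QuadraticAlgebra (ZMod 4) ((-1 : ℤ) : ZMod 4) 0

local notation "Q₋₂" => QuadraticAlgebra (ZMod 4) ((-2 : ℤ) : ZMod 4) 0

-- A unit `a + bi` of `ℤ[i]/4` has exactly one even coordinate; the character records whether
-- it is `2` rather than `0`.
def unitsCharModFourNegOne : Q₋₁ˣ →* Multiplicative (ZMod 2) :=
  MonoidHom.mk' (fun u => .ofAdd (if (u : Q₋₁).re * (u : Q₋₁).im = 0 then 0 else 1)) (by decide)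

theorem unitsCharModFourNegOne_surjective : Function.Surjective unitsCharModFourNegOne :=
  unitsCharModFourNegOne.surjective_of_exists_apply_eq_ofAdd_one (by decide)

theorem ker_unitsCharModFourNegOne : unitsCharModFourNegOne.ker =
    (Units.map (toQuadraticAlgebra (-1) 4 : ℤ√(-1) →* Q₋₁)).range := by
  ext u
  simp only [MonoidHom.mem_ker, MonoidHom.mem_range]
  constructor
  · intro hu
    have hi : (⟨0, 1⟩ : ℤ√(-1)) * ⟨0, -1⟩ = 1 := by decide
    obtain h | h | h | h := (by decide : ∀ u : Q₋₁ˣ, unitsCharModFourNegOne u = 1 →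
      (u : Q₋₁) = 1 ∨ (u : Q₋₁) = -1 ∨ (u : Q₋₁) = ⟨0, 1⟩ ∨ (u : Q₋₁) = ⟨0, -1⟩) u hu
    · exact ⟨1, Units.ext (by simp [h])⟩
    · exact ⟨-1, Units.ext (by simp [h])⟩
    · exact ⟨.mkOfMulEqOne _ _ hi, Units.ext (by simp [h])⟩
    · exact ⟨-.mkOfMulEqOne _ _ hi, Units.ext (by simp [h])⟩
  · rintro ⟨v, rfl⟩
    simp [unitsCharModFourNegOne, ← Int.cast_mul,
      re_mul_im_eq_zero_of_isUnit (by norm_num) v.isUnit]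

-- On units `a` is odd, so `ab ≡ ±b (mod 4)`; `1 + √-2` is a generator.
def unitsCharModFourNegTwo : Q₋₂ˣ →* Multiplicative (ZMod 4) :=
  MonoidHom.mk' (fun u => .ofAdd ((u : Q₋₂).re * (u : Q₋₂).im)) (by decide)

theorem unitsCharModFourNegTwo_surjective : Function.Surjective unitsCharModFourNegTwo :=
  unitsCharModFourNegTwo.surjective_of_exists_apply_eq_ofAdd_one (by decide)

theorem ker_unitsCharModFourNegTwo : unitsCharModFourNegTwo.ker =
    (Units.map (toQuadraticAlgebra (-2) 4 : ℤ√(-2) →* Q₋₂)).range := by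
  ext u
  simp only [MonoidHom.mem_ker, MonoidHom.mem_range]
  constructor
  · intro hu
    obtain h | h := (by decide : ∀ u : Q₋₂ˣ, unitsCharModFourNegTwo u = 1 →
      (u : Q₋₂) = 1 ∨ (u : Q₋₂) = -1) u hu
    · exact ⟨1, Units.ext (by simp [h])⟩
    · exact ⟨-1, Units.ext (by simp [h])⟩
  · rintro ⟨v, rfl⟩
    simp [unitsCharModFourNegTwo, ← Int.cast_mul,
      re_mul_im_eq_zero_of_isUnit (by norm_num) v.isUnit]

end Zsqrtd

/-- For `K = ℚ(i)` with `𝔞` the unique prime above `2`, the ray class group of modulus `𝔞⁴`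
is isomorphic to `ℤ/2ℤ`; for `K = ℚ(√-2)` with `𝔞` the unique prime above `2`, the ray class
group of modulus `𝔞⁴` is isomorphic to `ℤ/4ℤ`. -/
theorem rayClassGroup_modulus_a_pow_four :
    (∀ (K : Type) [Field K] [NumberField K] (α : K), α ^ 2 = -1 →
      Module.finrank ℚ K = 2 →
      ∀ 𝔞 : Ideal (𝓞 K), 𝔞.IsPrime → 𝔞 ∣ Ideal.span {(2 : 𝓞 K)} →
        RayClassGroupIsoZMod K (𝔞 ^ 4) 2) ∧
    (∀ (K : Type) [Field K] [NumberField K] (α : K), α ^ 2 = -2 →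
      Module.finrank ℚ K = 2 →
      ∀ 𝔞 : Ideal (𝓞 K), 𝔞.IsPrime → 𝔞 ∣ Ideal.span {(2 : 𝓞 K)} →
        RayClassGroupIsoZMod K (𝔞 ^ 4) 4) := by
  refine ⟨fun K _ _ α hα hrank 𝔞 h𝔞 h2 => ?_, fun K _ _ α hα hrank 𝔞 h𝔞 h2 => ?_⟩
  · obtain ⟨e⟩ := Zsqrtd.nonempty_ringEquiv_ringOfIntegers (d := -1) (.inl rfl)
      (by exact_mod_cast hα) hrank
    have hp2 : Associated ((⟨1, 1⟩ : ℤ√(-1)) ^ 2) 2 :=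
      ⟨.mkOfMulEqOne ⟨0, -1⟩ ⟨0, 1⟩ (by decide), by rw [Units.val_mkOfMulEqOne]; decide⟩
    rw [RayClassGroupIsoZMod, Zsqrtd.pow_four_eq_span_four_of_ringEquiv (by norm_num)
      (by norm_num) e (by decide) hp2 h𝔞 h2, ← Nat.cast_ofNat]
    exact Zsqrtd.rayClassGroupIsoZMod_span_natCast_of_ringEquiv (by norm_num) (by norm_num) e
      (by norm_num) Zsqrtd.unitsCharModFourNegOne_surjective Zsqrtd.ker_unitsCharModFourNegOne
  · obtain ⟨e⟩ := Zsqrtd.nonempty_ringEquiv_ringOfIntegers (d := -2) (.inr rfl)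
      (by exact_mod_cast hα) hrank
    have hp2 : Associated ((⟨0, 1⟩ : ℤ√(-2)) ^ 2) 2 := ⟨-1, by decide⟩
    rw [RayClassGroupIsoZMod, Zsqrtd.pow_four_eq_span_four_of_ringEquiv (by norm_num)
      (by norm_num) e (by decide) hp2 h𝔞 h2, ← Nat.cast_ofNat]
    exact Zsqrtd.rayClassGroupIsoZMod_span_natCast_of_ringEquiv (by norm_num) (by norm_num) e
      (by norm_num) Zsqrtd.unitsCharModFourNegTwo_surjective Zsqrtd.ker_unitsCharModFourNegTwo
end

section
/- Any subgroup H of GL_2(F_p) (p ≥ 5 prime) that acts irreducibly on F_p^2 and contains an element of order p must contain SL_2(F_p); if moreover det: H → F_p^* is surjective, then H = GL_2(F_p). -/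
/-!
An element `g` of order `p` in `GL₂(𝔽ₚ)` satisfies `(g - 1)² = 0`, so it is a transvection:
`g` fixes the line spanned by a vector `v` and moves every other vector by a multiple of `v`.
Irreducibility gives `h ∈ H` with `w = h v` off that line. In the basis `(v, w)` the element `g`
becomes an upper and `h g h⁻¹` a lower unitriangular matrix, and since `𝔽ₚ` is a prime field
their powers give all upper and all lower unitriangular matrices, which generate `SL₂(𝔽ₚ)`.
A subgroup containing `SL₂` on which `det` is surjective is everything.
-/

open Matrix

namespace Matrix

section

variable {n R : Type*} [Fintype n] [DecidableEq n] [CommRing R]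

theorem exists_mulVec_ne_zero {m : Type*} {N : Matrix m n R} (hN : N ≠ 0) :
    ∃ x, N *ᵥ x ≠ 0 := by
  by_contra! h
  exact hN (ext_of_mulVec_single fun j => by rw [h, zero_mulVec])

theorem pow_card_eq_zero_of_isNilpotent [IsDomain R] {N : Matrix n n R} (hN : IsNilpotent N) :
    N ^ Fintype.card n = 0 := by
  have hchar : N.charpoly = Polynomial.X ^ Fintype.card n :=
    sub_eq_zero.1 (isNilpotent_charpoly_sub_pow_of_isNilpotent hN).eq_zero
  simpa [hchar] using N.aeval_self_charpoly

theorem sub_one_pow_card_eq_zero_of_pow_eq_one [IsDomain R] [Nonempty n] (p : ℕ) [Fact p.Prime]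
    [CharP R p] {M : Matrix n n R} (hM : M ^ p = 1) : (M - 1) ^ Fintype.card n = 0 :=
  pow_card_eq_zero_of_isNilpotent
    ⟨p, by rw [sub_pow_char_of_commute p (Commute.one_right M), hM, one_pow, sub_self]⟩

end

section

variable {F : Type*} [Field F]

def ofCols (v w : Fin 2 → F) : Matrix (Fin 2) (Fin 2) F :=
  of fun i j => ![v, w] j i

theorem isUnit_ofCols_iff {v w : Fin 2 → F} :
    IsUnit (ofCols v w) ↔ LinearIndependent F ![v, w] := by
  rw [← linearIndependent_cols_iff_isUnit]
  congr!

theorem mul_ofCols (M : Matrix (Fin 2) (Fin 2) F) (v w : Fin 2 → F) :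
    M * ofCols v w = ofCols (M *ᵥ v) (M *ᵥ w) := by
  ext i j
  fin_cases i <;> fin_cases j <;> simp [ofCols, mul_apply, Fin.sum_univ_two]

theorem ofCols_mul_fin_two (v w : Fin 2 → F) (a b c d : F) :
    ofCols v w * !![a, b; c, d] = ofCols (a • v + c • w) (b • v + d • w) := by
  ext i j
  fin_cases j <;> simp [ofCols, mul_apply, Fin.sum_univ_two, mul_comm]

theorem eq_zero_of_mulVec_pair_eq_zero {N : Matrix (Fin 2) (Fin 2) F} {v w : Fin 2 → F}
    (hvw : LinearIndependent F ![v, w]) (hv : N *ᵥ v = 0) (hw : N *ᵥ w = 0) : N = 0 := by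
  have hNP : N * ofCols v w = 0 := by
    rw [mul_ofCols, hv, hw]
    ext i j
    fin_cases j <;> rfl
  exact ((isUnit_ofCols_iff.2 hvw).mul_left_eq_zero).1 hNP

/-- A square-zero `N ≠ 0` has rank one, and its range is its kernel. -/
theorem exists_mulVec_eq_smul_of_sq_eq_zero {N : Matrix (Fin 2) (Fin 2) F} (hN : N ≠ 0)
    (hN2 : N ^ 2 = 0) {v w : Fin 2 → F} (hvw : LinearIndependent F ![v, w])
    (hv : N *ᵥ v = 0) : ∃ c : F, c ≠ 0 ∧ N *ᵥ w = c • v := by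
  have hw : N *ᵥ w ≠ 0 := fun hw => hN (eq_zero_of_mulVec_pair_eq_zero hvw hv hw)
  have hNw : N *ᵥ (N *ᵥ w) = 0 := by rw [mulVec_mulVec, ← sq, hN2, zero_mulVec]
  obtain ⟨c, hc⟩ : ∃ c : F, c • v = N *ᵥ w := by
    by_contra! h
    exact hN (eq_zero_of_mulVec_pair_eq_zero
      ((LinearIndependent.pair_iff' (hvw.ne_zero 0)).2 h) hv hNw)
  refine ⟨c, ?_, hc.symm⟩
  rintro rfl
  exact hw (by rw [← hc, zero_smul])

theorem transvection_zero_one_fin_two (c : F) : transvection (0 : Fin 2) 1 c = !![1, c; 0, 1] := by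
  ext i j
  fin_cases i <;> fin_cases j <;> simp [transvection]

theorem transvection_one_zero_fin_two (c : F) : transvection (1 : Fin 2) 0 c = !![1, 0; c, 1] := by
  ext i j
  fin_cases i <;> fin_cases j <;> simp [transvection]

theorem exists_mul_ofCols_eq_transvection {M : Matrix (Fin 2) (Fin 2) F} (hM : M ≠ 1)
    (hM2 : (M - 1) ^ 2 = 0) {v w : Fin 2 → F} (hvw : LinearIndependent F ![v, w])
    (hv : (M - 1) *ᵥ v = 0) :
    ∃ c : F, c ≠ 0 ∧ M * ofCols v w = ofCols v w * transvection 0 1 c ∧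
      M * ofCols w v = ofCols w v * transvection 1 0 c := by
  obtain ⟨c, hc, hw⟩ := exists_mulVec_eq_smul_of_sq_eq_zero (sub_ne_zero.2 hM) hM2 hvw hv
  have hMv : M *ᵥ v = v := by rwa [sub_mulVec, one_mulVec, sub_eq_zero] at hv
  have hMw : M *ᵥ w = w + c • v := by rw [← hw, sub_mulVec, one_mulVec, add_sub_cancel]
  refine ⟨c, hc, ?_, ?_⟩
  · rw [mul_ofCols, transvection_zero_one_fin_two, ofCols_mul_fin_two, hMv, hMw]
    simp [add_comm]
  · rw [mul_ofCols, transvection_one_zero_fin_two, ofCols_mul_fin_two, hMv, hMw]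
    simp

end

end Matrix

theorem exists_mem_mulVec_notMem_span_singleton {F n : Type*} [Field F] [Fintype n]
    [DecidableEq n] [Nontrivial n] {H : Subgroup (GL n F)}
    (hirr : ∀ V : Submodule F (n → F),
      (∀ g ∈ H, ∀ v ∈ V, (g : Matrix n n F) *ᵥ v ∈ V) → V = ⊥ ∨ V = ⊤)
    {v : n → F} (hv : v ≠ 0) : ∃ g ∈ H, (g : Matrix n n F) *ᵥ v ∉ F ∙ v := by
  by_contra! hH
  have hstable : ∀ g ∈ H, ∀ x ∈ F ∙ v, (g : Matrix n n F) *ᵥ x ∈ F ∙ v := by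
    intro g hg x hx
    obtain ⟨a, rfl⟩ := Submodule.mem_span_singleton.1 hx
    rw [mulVec_smul]
    exact Submodule.smul_mem _ a (hH g hg)
  rcases hirr _ hstable with hbot | htop
  · exact hv (Submodule.span_singleton_eq_bot.1 hbot)
  · have hrank := finrank_span_singleton (K := F) hv
    rw [htop, finrank_top, Module.finrank_fintype_fun_eq_card] at hrank
    exact Fintype.one_lt_card.ne' hrank

namespace Matrix.SpecialLinearGroup

variable {ι R : Type*} [Fintype ι] [DecidableEq ι] [CommRing R]

theorem transvection_pow {i j : ι} (hij : i ≠ j) (c : R) (k : ℕ) :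
    transvection hij c ^ k = transvection hij (k * c) := by
  induction k with
  | zero => simp
  | succ k ih => rw [pow_succ, ih, ← transvection_add]; congr 1; push_cast; ring

theorem conj_transvection_mem_of_ne_zero {p : ℕ} [Fact p.Prime] {H : Subgroup (GL ι (ZMod p))}
    {P : GL ι (ZMod p)} {i j : ι} {hij : i ≠ j} {c : ZMod p} (hc : c ≠ 0)
    (hcH : MulAut.conj P (transvection hij c).toGL ∈ H) (t : ZMod p) :
    MulAut.conj P (transvection hij t).toGL ∈ H := by
  have ht : transvection hij t = transvection hij c ^ (t / c).val := by
    rw [transvection_pow, ZMod.natCast_zmod_val, div_mul_cancel₀ _ hc]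
  rw [ht, map_pow, map_pow]
  exact pow_mem hcH _

theorem exists_conj_transvections_mem {F : Type*} [Field F] {H : Subgroup (GL (Fin 2) F)}
    (hH : ∀ v : Fin 2 → F, v ≠ 0 →
      ∃ h ∈ H, (h : Matrix (Fin 2) (Fin 2) F) *ᵥ v ∉ F ∙ v)
    {g : GL (Fin 2) F} (hgH : g ∈ H) (hg : g ≠ 1)
    (hg2 : ((g : Matrix (Fin 2) (Fin 2) F) - 1) ^ 2 = 0) :
    ∃ P : GL (Fin 2) F,
      (∃ c : F, c ≠ 0 ∧ MulAut.conj P (transvection zero_ne_one c).toGL ∈ H) ∧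
      (∃ d : F, d ≠ 0 ∧ MulAut.conj P (transvection one_ne_zero d).toGL ∈ H) := by
  have hg' : (g : Matrix (Fin 2) (Fin 2) F) ≠ 1 := fun h => hg (Units.ext h)
  obtain ⟨v, hv0, hv⟩ : ∃ v, v ≠ 0 ∧ ((g : Matrix (Fin 2) (Fin 2) F) - 1) *ᵥ v = 0 := by
    obtain ⟨x, hx⟩ := exists_mulVec_ne_zero (sub_ne_zero.2 hg')
    exact ⟨_, hx, by rw [mulVec_mulVec, ← sq, hg2, zero_mulVec]⟩
  obtain ⟨h, hhH, hhv⟩ := hH v hv0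
  have hvw : LinearIndependent F ![v, (h : Matrix (Fin 2) (Fin 2) F) *ᵥ v] :=
    (LinearIndependent.pair_iff' hv0).2 fun a ha =>
      hhv (ha ▸ Submodule.smul_mem _ a (Submodule.mem_span_singleton_self v))
  set P : GL (Fin 2) F := (isUnit_ofCols_iff.2 hvw).unit
  -- `g` is lower unitriangular in the basis `(h⁻¹ v, v)`, which `h` carries to `(v, h v)`
  have hQ :
      ((h⁻¹ * P : GL (Fin 2) F) : Matrix (Fin 2) (Fin 2) F) = ofCols (↑h⁻¹ *ᵥ v) v := by
    rw [Units.val_mul, IsUnit.unit_spec, mul_ofCols, mulVec_mulVec, ← Units.val_mul,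
      inv_mul_cancel, Units.val_one, one_mulVec]
  have hvu : LinearIndependent F ![v, ↑h⁻¹ *ᵥ v] := by
    rw [LinearIndependent.pair_symm_iff, ← isUnit_ofCols_iff, ← hQ]
    exact Units.isUnit _
  obtain ⟨c, hc, hgP, -⟩ := exists_mul_ofCols_eq_transvection hg' hg2 hvw hv
  obtain ⟨d, hd, -, hgQ⟩ := exists_mul_ofCols_eq_transvection hg' hg2 hvu hv
  refine ⟨P, ⟨c, hc, ?_⟩, ⟨d, hd, ?_⟩⟩
  · have hgc : g = MulAut.conj P (transvection zero_ne_one c).toGL :=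
      eq_mul_inv_of_mul_eq (Units.ext hgP)
    rwa [← hgc]
  · have hgd : g = MulAut.conj (h⁻¹ * P) (transvection one_ne_zero d).toGL := by
      refine eq_mul_inv_of_mul_eq (Units.ext ?_)
      rw [Units.val_mul, Units.val_mul (h⁻¹ * P), hQ]
      exact hgQ
    have hconj : MulAut.conj h g = MulAut.conj P (transvection one_ne_zero d).toGL := by
      rw [hgd, ← MulAut.mul_apply, ← map_mul, mul_inv_cancel_left]
    rw [← hconj, MulAut.conj_apply]
    exact mul_mem (mul_mem hhH hgH) (inv_mem hhH)

theorem toGL_mem_of_conj_transvection_mem {F : Type*} [Field F]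
    {H : Subgroup (GL (Fin 2) F)} {P : GL (Fin 2) F}
    (h01 : ∀ t : F, MulAut.conj P (transvection zero_ne_one t).toGL ∈ H)
    (h10 : ∀ t : F, MulAut.conj P (transvection one_ne_zero t).toGL ∈ H)
    (A : SpecialLinearGroup (Fin 2) F) : A.toGL ∈ H := by
  have hconj : ∀ B : SpecialLinearGroup (Fin 2) F, MulAut.conj P B.toGL ∈ H := by
    refine SL2.transvection_induction _ (fun i j hij t => ?_)
      (fun A B hA hB => by simpa only [map_mul] using mul_mem hA hB)
    fin_cases i <;> fin_cases j
    exacts [absurd rfl hij, h01 t, h10 t, absurd rfl hij]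
  have hdet : (↑(P⁻¹ * A.toGL * P) : Matrix (Fin 2) (Fin 2) F).det = 1 := by
    rw [← GeneralLinearGroup.val_det_apply, map_mul, map_mul, mul_comm, ← mul_assoc, map_inv,
      mul_inv_cancel, one_mul, GeneralLinearGroup.val_det_apply]
    exact A.det_coe
  have hA : MulAut.conj P (toGL ⟨_, hdet⟩) = A.toGL := by
    rw [show toGL ⟨_, hdet⟩ = P⁻¹ * A.toGL * P from Units.ext rfl, MulAut.conj_apply]
    group
  exact hA ▸ hconj _

theorem eq_top_of_toGL_mem_of_det_surjective {H : Subgroup (GL ι R)}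
    (hSL : ∀ A : SpecialLinearGroup ι R, A.toGL ∈ H)
    (hdet : ∀ u : Rˣ, ∃ g ∈ H, GeneralLinearGroup.det g = u) : H = ⊤ := by
  refine eq_top_iff.2 fun x _ => ?_
  obtain ⟨g, hgH, hg⟩ := hdet (GeneralLinearGroup.det x)
  have hdet1 : (↑(x * g⁻¹) : Matrix ι ι R).det = 1 := by
    rw [← GeneralLinearGroup.val_det_apply, map_mul, map_inv, hg, mul_inv_cancel, Units.val_one]
  have hx : toGL ⟨_, hdet1⟩ = x * g⁻¹ := Units.ext rfl
  rw [← inv_mul_cancel_right x g, ← hx]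
  exact mul_mem (hSL _) hgH

end Matrix.SpecialLinearGroup

theorem subgroup_contains_SL2_general
    (p : ℕ) (hp : p.Prime)
    (H : Subgroup (GL (Fin 2) (ZMod p)))
    (hirr : ∀ V : Submodule (ZMod p) (Fin 2 → ZMod p),
      (∀ g ∈ H, ∀ v ∈ V, (g : Matrix (Fin 2) (Fin 2) (ZMod p)).mulVec v ∈ V) →
        V = ⊥ ∨ V = ⊤)
    (hordp : ∃ g ∈ H, orderOf g = p) :
    (∀ A : Matrix.SpecialLinearGroup (Fin 2) (ZMod p), A.toGL ∈ H) ∧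
      ((∀ u : (ZMod p)ˣ, ∃ g ∈ H, Matrix.GeneralLinearGroup.det g = u) → H = ⊤) := by
  have : Fact p.Prime := ⟨hp⟩
  obtain ⟨g, hgH, hg⟩ := hordp
  have hg1 : g ≠ 1 := by
    rintro rfl
    exact hp.one_lt.ne (orderOf_one.symm.trans hg)
  have hg2 : ((g : Matrix (Fin 2) (Fin 2) (ZMod p)) - 1) ^ 2 = 0 := by
    refine sub_one_pow_card_eq_zero_of_pow_eq_one p ?_
    rw [← Units.val_pow_eq_pow_val, orderOf_dvd_iff_pow_eq_one.1 hg.dvd, Units.val_one]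
  obtain ⟨P, ⟨c, hc, hcH⟩, ⟨d, hd, hdH⟩⟩ :=
    SpecialLinearGroup.exists_conj_transvections_mem
      (fun _ hv => exists_mem_mulVec_notMem_span_singleton hirr hv) hgH hg1 hg2
  have hSL := SpecialLinearGroup.toGL_mem_of_conj_transvection_mem
    (SpecialLinearGroup.conj_transvection_mem_of_ne_zero hc hcH)
    (SpecialLinearGroup.conj_transvection_mem_of_ne_zero hd hdH)
  exact ⟨hSL, SpecialLinearGroup.eq_top_of_toGL_mem_of_det_surjective hSL⟩

/-- Any subgroup `H` of `GL₂(𝔽ₚ)` (`p ≥ 5` prime) acting irreducibly on `𝔽ₚ²` and containing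
an element of order `p` must contain `SL₂(𝔽ₚ)`; if moreover `det : H → 𝔽ₚ^*` is surjective,
then `H = GL₂(𝔽ₚ)`. -/
theorem subgroup_contains_SL2
    (p : ℕ) (hp : p.Prime) (hp5 : 5 ≤ p)
    (H : Subgroup (GL (Fin 2) (ZMod p)))
    (hirr : ∀ V : Submodule (ZMod p) (Fin 2 → ZMod p),
      (∀ g ∈ H, ∀ v ∈ V, (g : Matrix (Fin 2) (Fin 2) (ZMod p)).mulVec v ∈ V) →
        V = ⊥ ∨ V = ⊤)
    (hordp : ∃ g ∈ H, orderOf g = p) :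
    (∀ A : Matrix.SpecialLinearGroup (Fin 2) (ZMod p), A.toGL ∈ H) ∧
      ((∀ u : (ZMod p)ˣ, ∃ g ∈ H, Matrix.GeneralLinearGroup.det g = u) → H = ⊤) :=
  subgroup_contains_SL2_general p hp H hirr hordp
end
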